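/- Let C : ℝ → ℝ³ be a closed curve of period L, of class C², simple (injective on [0, L)), with regular parametrization (C' never vanishes). Then the writhe integrand ω(s, t) = ((C'(s) × C'(t)) · (C(s) − C(t)))/|C(s) − C(t)|³, defined for s ≢ t (mod L), extends to a continuous function on all of ℝ² taking the value 0 at every diagonal point s ≡ t (mod L). -/

import Mathlib

/-!
Near a diagonal point `(a, a)` write `h = s - t`, `A = C'(t)` and `W = C''(a)`. Strict
differentiability of `C'` at `a` gives, uniformly as `(s, t) → (a, a)`,
`C'(s) = A + h W + o(h)` and `C(s) - C(t) = h A + (h² / 2) W + o(h²)`. The triple product is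
alternating, so every term of order at most `h³` cancels and the numerator of `ω` is `o(h³)`,
while `C'(a) ≠ 0` gives `|C(s) - C(t)| ≥ c |h|`; hence `ω → 0`. Off the diagonal `ω` is a quotient
of continuous functions, and periodicity together with injectivity on a period moves every point
with `C s = C t` to a point `(a, a)`.
-/

noncomputable section

/-- Cross product on `ℝ³`. -/
def cross3 (v w : EuclideanSpace ℝ (Fin 3)) : EuclideanSpace ℝ (Fin 3) :=
  WithLp.toLp 2 ![v 1 * w 2 - v 2 * w 1, v 2 * w 0 - v 0 * w 2, v 0 * w 1 - v 1 * w 0]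

/-- Euclidean inner product on `ℝ³`. -/
def dot3 (v w : EuclideanSpace ℝ (Fin 3)) : ℝ := inner ℝ v w

open Filter Topology Asymptotics

local notation "ℝ³" => EuclideanSpace ℝ (Fin 3)

lemma dot3_cross3 (u v w : ℝ³) :
    dot3 (cross3 u v) w = (u 1 * v 2 - u 2 * v 1) * w 0 + (u 2 * v 0 - u 0 * v 2) * w 1
      + (u 0 * v 1 - u 1 * v 0) * w 2 := by
  simp only [dot3, cross3, PiLp.inner_apply, RCLike.inner_apply, Real.ringHom_apply,
    Fin.sum_univ_three, Matrix.cons_val_zero, Matrix.cons_val_one, Matrix.cons_val]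
  ring

lemma norm_sq_eq_three (v : ℝ³) : ‖v‖ ^ 2 = v 0 ^ 2 + v 1 ^ 2 + v 2 ^ 2 := by
  simp [EuclideanSpace.norm_sq_eq, Fin.sum_univ_three]

lemma norm_cross3_sq_add_inner_sq (u v : ℝ³) :
    ‖cross3 u v‖ ^ 2 + inner ℝ u v ^ 2 = ‖u‖ ^ 2 * ‖v‖ ^ 2 := by
  simp only [norm_sq_eq_three, cross3, PiLp.inner_apply, Fin.sum_univ_three, RCLike.inner_apply,
    Real.ringHom_apply, Matrix.cons_val_zero, Matrix.cons_val_one, Matrix.cons_val]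
  ring

lemma norm_cross3_le (u v : ℝ³) : ‖cross3 u v‖ ≤ ‖u‖ * ‖v‖ := by
  refine pow_le_pow_iff_left₀ (norm_nonneg _) (by positivity) two_ne_zero |>.1 ?_
  rw [mul_pow, ← norm_cross3_sq_add_inner_sq]
  nlinarith [sq_nonneg (inner ℝ u v)]

lemma abs_dot3_cross3_le (u v w : ℝ³) : |dot3 (cross3 u v) w| ≤ ‖u‖ * ‖v‖ * ‖w‖ :=
  (abs_real_inner_le_norm _ _).trans (by gcongr; exact norm_cross3_le u v)

lemma dot3_cross3_taylor (A W b d : ℝ³) (h : ℝ) :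
    dot3 (cross3 (A + h • W + b) A) (h • A + (h ^ 2 / 2) • W + d)
      = -(h * dot3 (cross3 A W) d + h ^ 2 / 2 * dot3 (cross3 A b) W + dot3 (cross3 A b) d) := by
  simp only [dot3_cross3, PiLp.add_apply, PiLp.smul_apply, smul_eq_mul]
  ring

lemma abs_dot3_cross3_taylor_le (A W b d : ℝ³) (h : ℝ) :
    |dot3 (cross3 (A + h • W + b) A) (h • A + (h ^ 2 / 2) • W + d)|
      ≤ ‖A‖ * (‖W‖ * (|h| * ‖d‖) + ‖W‖ * (h ^ 2 * ‖b‖) + ‖b‖ * ‖d‖) := by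
  rw [dot3_cross3_taylor, abs_neg]
  have h₁ := abs_dot3_cross3_le A W d
  have h₂ := abs_dot3_cross3_le A b W
  have h₃ := abs_dot3_cross3_le A b d
  calc _ ≤ |h| * |dot3 (cross3 A W) d| + h ^ 2 / 2 * |dot3 (cross3 A b) W|
        + |dot3 (cross3 A b) d| := by
        refine (abs_add_le _ _).trans (add_le_add_left ((abs_add_le _ _).trans ?_) _)
        rw [abs_mul, abs_mul, abs_of_nonneg (by positivity : 0 ≤ h ^ 2 / 2)]
    _ ≤ _ := by
        have e₁ := mul_le_mul_of_nonneg_left h₁ (abs_nonneg h)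
        have e₂ := mul_le_mul_of_nonneg_left h₂ (by positivity : 0 ≤ h ^ 2 / 2)
        have e₃ : 0 ≤ h ^ 2 / 2 * (‖A‖ * ‖b‖ * ‖W‖) := by positivity
        linarith

lemma isLittleO_sub_sub_taylor_two {E : Type*} [NormedAddCommGroup E] [NormedSpace ℝ E]
    {f f' : ℝ → E} {f'' : E} {a : ℝ} (hf : ∀ x, HasDerivAt f (f' x) x)
    (hf' : HasStrictDerivAt f' f'' a) :
    (fun p : ℝ × ℝ => f p.1 - f p.2 - (p.1 - p.2) • f' p.2 - ((p.1 - p.2) ^ 2 / 2) • f'')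
      =o[𝓝 (a, a)] fun p => (p.1 - p.2) ^ 2 := by
  refine IsLittleO.of_bound fun ε hε => ?_
  obtain ⟨r, hr, hball⟩ :=
    Metric.eventually_nhds_iff_ball.1 ((hasDerivAtFilter_iff_isLittleO.1 hf').def hε)
  filter_upwards [Metric.ball_mem_nhds (a, a) hr] with ⟨s, t⟩ hst
  rw [← ball_prod_same] at hst
  obtain ⟨hs, ht⟩ := hst
  have hseg : Set.uIcc t s ⊆ Metric.ball a r := (convex_ball a r).ordConnected.uIcc_subset ht hs
  have hderiv : ∀ u, HasDerivAt (fun u => f u - (u - t) • f' t - ((u - t) ^ 2 / 2) • f'')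
      (f' u - f' t - (u - t) • f'') u := by
    intro u
    have h₁ := ((hasDerivAt_id u).sub_const t).smul_const (f' t)
    have h₂ := ((((hasDerivAt_id u).sub_const t).pow 2).div_const 2).smul_const f''
    convert ((hf u).sub h₁).sub h₂ using 2 <;> simp
  have hbound : ∀ u ∈ Set.uIcc t s, ‖f' u - f' t - (u - t) • f''‖ ≤ ε * ‖s - t‖ := by
    intro u hu
    calc ‖f' u - f' t - (u - t) • f''‖ ≤ ε * ‖u - t‖ :=
          hball (u, t) (ball_prod_same a a r ▸ ⟨hseg hu, ht⟩)
      _ ≤ ε * ‖s - t‖ := by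
          gcongr
          simpa [Real.dist_eq, abs_sub_comm t s] using Real.dist_le_of_mem_uIcc hu Set.left_mem_uIcc
  have := Convex.norm_image_sub_le_of_norm_hasDerivWithin_le
    (fun u _ => (hderiv u).hasDerivWithinAt) hbound (convex_uIcc t s)
    Set.left_mem_uIcc Set.right_mem_uIcc
  calc _ = ‖(f s - (s - t) • f' t - ((s - t) ^ 2 / 2) • f'')
        - (f t - (t - t) • f' t - ((t - t) ^ 2 / 2) • f'')‖ := by
          simp only [sub_self, zero_smul, sub_zero, zero_pow two_ne_zero, zero_div]; abel_nf
    _ ≤ ε * ‖s - t‖ * ‖s - t‖ := this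
    _ = ε * ‖(s - t) ^ 2‖ := by rw [norm_pow, mul_assoc, sq]

lemma dot3_cross3_isLittleO {f f' : ℝ → ℝ³} {f'' : ℝ³} {a : ℝ}
    (hf : ∀ x, HasDerivAt f (f' x) x) (hf' : HasStrictDerivAt f' f'' a) :
    (fun p : ℝ × ℝ => dot3 (cross3 (f' p.1) (f' p.2)) (f p.1 - f p.2))
      =o[𝓝 (a, a)] fun p => (p.1 - p.2) ^ 3 := by
  set h : ℝ × ℝ → ℝ := fun p => p.1 - p.2
  set b : ℝ × ℝ → ℝ³ := fun p => f' p.1 - f' p.2 - h p • f''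
  set d : ℝ × ℝ → ℝ³ := fun p => f p.1 - f p.2 - h p • f' p.2 - (h p ^ 2 / 2) • f''
  have hb : b =o[𝓝 (a, a)] h := hasDerivAtFilter_iff_isLittleO.1 hf'
  have hd : d =o[𝓝 (a, a)] fun p => h p ^ 2 := isLittleO_sub_sub_taylor_two hf hf'
  have hA : (fun p : ℝ × ℝ => f' p.2) =O[𝓝 (a, a)] fun _ => (1 : ℝ) :=
    (hf'.hasDerivAt.continuousAt.comp continuousAt_snd).tendsto.isBigO_one ℝ
  have hbound : ∀ p : ℝ × ℝ, ‖dot3 (cross3 (f' p.1) (f' p.2)) (f p.1 - f p.2)‖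
      ≤ ‖‖f' p.2‖ * (‖f''‖ * (|h p| * ‖d p‖) + ‖f''‖ * (h p ^ 2 * ‖b p‖) + ‖b p‖ * ‖d p‖)‖ := by
    intro p
    have hB : f' p.1 = f' p.2 + h p • f'' + b p := by simp only [b]; abel
    have hD : f p.1 - f p.2 = h p • f' p.2 + (h p ^ 2 / 2) • f'' + d p := by simp only [d]; abel
    rw [Real.norm_eq_abs, hB, hD]
    exact (abs_dot3_cross3_taylor_le _ _ _ _ _).trans (le_abs_self _)
  have hh : (fun p => |h p|) =O[𝓝 (a, a)] h := (isBigO_refl h _).norm_left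
  have h₁ := (hh.mul_isLittleO hd.norm_left).const_mul_left ‖f''‖
  have h₂ := ((isBigO_refl (fun p => h p ^ 2) _).mul_isLittleO hb.norm_left).const_mul_left ‖f''‖
  have h₃ := hb.norm_left.mul hd.norm_left
  have hsum := hA.norm_left.mul_isLittleO ((h₁.add (h₂.congr_right fun p => by ring)).add
    (h₃.congr_right fun p => by ring))
  exact (isBigO_of_le _ hbound).trans_isLittleO (hsum.congr_right fun p => by ring)

lemma Function.Periodic.deriv {E : Type*} [NormedAddCommGroup E] [NormedSpace ℝ E] {f : ℝ → E}
    {c : ℝ} (hf : Function.Periodic f c) : Function.Periodic (deriv f) c := fun x => by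
  rw [← deriv_comp_add_const, hf.funext]

lemma Function.Periodic.exists_int_of_eq_of_injOn {α : Type*} {f : ℝ → α} {c : ℝ}
    (hf : Function.Periodic f c) (hc : 0 < c) (hinj : Set.InjOn f (Set.Ico 0 c)) {s t : ℝ}
    (hst : f s = f t) : ∃ k : ℤ, s - t = k * c := by
  have hmem : ∀ x : ℝ, x - ⌊x / c⌋ * c ∈ Set.Ico 0 c := fun x =>
    ⟨Int.sub_floor_div_mul_nonneg x hc, Int.sub_floor_div_mul_lt x hc⟩
  have := hinj (hmem s) (hmem t) (by rw [hf.sub_int_mul_eq, hf.sub_int_mul_eq, hst])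
  exact ⟨⌊s / c⌋ - ⌊t / c⌋, by push_cast; linarith⟩

lemma Continuous.cross3 {α : Type*} [TopologicalSpace α] {f g : α → ℝ³} (hf : Continuous f)
    (hg : Continuous g) : Continuous fun x => cross3 (f x) (g x) := by
  refine (PiLp.continuous_toLp 2 _).comp (continuous_pi fun i => ?_)
  fin_cases i <;>
    simp only [Fin.zero_eta, Fin.mk_one, Fin.reduceFinMk, Matrix.cons_val_zero,
      Matrix.cons_val_one, Matrix.cons_val] <;>
    fun_prop

/-- Since `x / 0 = 0`, this vanishes wherever `C s = C t`: it is already the continuous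
extension of `ω`. -/
def writheIntegrand (C : ℝ → ℝ³) (p : ℝ × ℝ) : ℝ :=
  dot3 (cross3 (deriv C p.1) (deriv C p.2)) (C p.1 - C p.2) / ‖C p.1 - C p.2‖ ^ 3

lemma writheIntegrand_of_eq {C : ℝ → ℝ³} {s t : ℝ} (h : C s = C t) :
    writheIntegrand C (s, t) = 0 := by
  simp [writheIntegrand, h]

lemma writheIntegrand_add_right {C : ℝ → ℝ³} {c : ℝ} (hC : Function.Periodic C c) (s t : ℝ) :
    writheIntegrand C (s, t + c) = writheIntegrand C (s, t) := by
  simp only [writheIntegrand, hC t, hC.deriv t]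

lemma continuousAt_writheIntegrand_of_ne {C : ℝ → ℝ³} (hC : ContDiff ℝ 1 C) {s t : ℝ}
    (hst : C s ≠ C t) : ContinuousAt (writheIntegrand C) (s, t) := by
  have hC₀ := hC.continuous
  have hC' := hC.continuous_deriv le_rfl
  refine ContinuousAt.div ?_ ?_ (pow_ne_zero 3 (norm_ne_zero_iff.2 (sub_ne_zero.2 hst)))
  · exact ((hC'.comp continuous_fst).cross3 (hC'.comp continuous_snd)).inner
      ((hC₀.comp continuous_fst).sub (hC₀.comp continuous_snd)) |>.continuousAt
  · fun_prop

lemma continuousAt_writheIntegrand_diag {C : ℝ → ℝ³} (hC : ContDiff ℝ 2 C) {a : ℝ}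
    (ha : deriv C a ≠ 0) : ContinuousAt (writheIntegrand C) (a, a) := by
  have hN := dot3_cross3_isLittleO (fun x => (hC.differentiable two_ne_zero x).hasDerivAt)
    ((hC.deriv' (n := 1)).hasStrictDerivAt (x := a) one_ne_zero)
  have hD : (fun p : ℝ × ℝ => p.1 - p.2) =O[𝓝 (a, a)] fun p => C p.1 - C p.2 :=
    (HasDerivAtFilter.isTheta_sub (hC.hasStrictDerivAt two_ne_zero) ha).isBigO_symm
  have := (hN.trans_isBigO (hD.norm_right.pow 3)).tendsto_div_nhds_zero
  rwa [ContinuousAt, writheIntegrand_of_eq rfl]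

lemma continuous_writheIntegrand {C : ℝ → ℝ³} {L : ℝ} (hL : 0 < L) (hP : Function.Periodic C L)
    (hC : ContDiff ℝ 2 C) (hinj : Set.InjOn C (Set.Ico 0 L)) (hreg : ∀ s, deriv C s ≠ 0) :
    Continuous (writheIntegrand C) := by
  refine continuous_iff_continuousAt.2 fun ⟨s, t⟩ => ?_
  by_cases hst : C s = C t
  · obtain ⟨k, hk⟩ := hP.exists_int_of_eq_of_injOn hL hinj hst
    have hshift : writheIntegrand C = writheIntegrand C ∘ fun p => (p.1, p.2 + k * L) :=
      funext fun p => (writheIntegrand_add_right (hP.int_mul k) p.1 p.2).symm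
    rw [hshift]
    refine ContinuousAt.comp ?_ (by fun_prop)
    rw [show t + k * L = s by linarith]
    exact continuousAt_writheIntegrand_diag hC (hreg s)
  · exact continuousAt_writheIntegrand_of_ne (hC.of_le one_le_two) hst

/-- For a simple closed regular `C²` curve `C` of period `L`, the writhe
integrand `ω(s,t) = ((C'(s) × C'(t))·(C s − C t))/|C s − C t|³`, defined for
`s ≢ t (mod L)`, extends to a continuous function on `ℝ²` vanishing at every diagonal
point `s ≡ t (mod L)`. -/
theorem writhe_integrand_extends_continuously
    (C : ℝ → EuclideanSpace ℝ (Fin 3)) (L : ℝ) (hL : 0 < L)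
    (hP : Function.Periodic C L)
    (hC : ContDiff ℝ 2 C)
    (hinj : Set.InjOn C (Set.Ico (0:ℝ) L))
    (hreg : ∀ s : ℝ, deriv C s ≠ 0) :
    ∃ ω : ℝ × ℝ → ℝ, Continuous ω ∧
      (∀ s t : ℝ, ¬(∃ k : ℤ, s - t = k * L) →
        ω (s, t) =
          dot3 (cross3 (deriv C s) (deriv C t)) (C s - C t) / ‖C s - C t‖ ^ 3) ∧
      (∀ s t : ℝ, (∃ k : ℤ, s - t = k * L) → ω (s, t) = 0) := by
  refine ⟨writheIntegrand C, continuous_writheIntegrand hL hP hC hinj hreg, fun _ _ _ => rfl, ?_⟩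
  rintro s t ⟨k, hk⟩
  exact writheIntegrand_of_eq (by rw [show s = t + k * L by linarith, hP.int_mul k])

end
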